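/- arXiv:1912.10340 — 9 statements merged into one kernel-verified Lean document; each statement's English description precedes it below -/
import Mathlib

section
/- Let p_1, p_2, …, p_n be multivariate polynomials in d real variables and let p(x) = Π_{j=1}^n p_j(x) be their product. Then ‖p‖² ≤ n^{Σ_{j=1}^n deg(p_j)} · Π_{j=1}^n ‖p_j‖². -/
/-!
Expanding the product, the `β`-coefficient of `∏ j, p j` is a sum over the tuples `F` of
exponents `F j ∈ (p j).support` with `∑ j, F j = β`. By Cauchy–Schwarz its square is at most the
number of such tuples times the sum of the squared products of coefficients. A tuple distributes
each of the `|β|` units of `β` among the `n` factors, so there are at most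
`n ^ |β| ≤ n ^ ∑ j, deg (p j)` of them. Summing over `β`, every tuple occurs once, and the sum over
all tuples of the squared products is `∏ j, ‖p j‖²`.
-/

open Finset

noncomputable def mvNorm {d : ℕ} (p : MvPolynomial (Fin d) ℝ) : ℝ :=
  Real.sqrt (∑ α ∈ p.support, (MvPolynomial.coeff α p) ^ 2)

theorem Finset.card_piAntidiag_le {ι : Type*} [DecidableEq ι] (s : Finset ι) (m : ℕ) :
    #(piAntidiag s m) ≤ #s ^ m := by
  -- multinomial theorem at `1 + ⋯ + 1`, with every multinomial coefficient at least `1`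
  have h := sum_pow_eq_sum_piAntidiag s (fun _ => (1 : ℕ)) m
  simp only [sum_const, smul_eq_mul, mul_one, one_pow, prod_const_one] at h
  rw [h, card_eq_sum_ones]
  exact sum_le_sum fun k _ => Nat.multinomial_pos _ _

theorem Finset.card_filter_piFinset_sum_eq_le {ι σ : Type*} [Fintype ι] [DecidableEq ι]
    [Fintype σ] [DecidableEq σ] (s : ι → Finset (σ →₀ ℕ)) (β : σ →₀ ℕ) :
    #{F ∈ Fintype.piFinset s | ∑ j, F j = β} ≤ Fintype.card ι ^ β.degree := by
  let transpose (F : ι → σ →₀ ℕ) (i : σ) (j : ι) : ℕ := F j i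
  have hmaps : ∀ F ∈ {F ∈ Fintype.piFinset s | ∑ j, F j = β},
      transpose F ∈ Fintype.piFinset fun i => piAntidiag univ (β i) := by
    intro F hF
    simp only [mem_filter] at hF
    simp [transpose, mem_piAntidiag, ← hF.2, Finsupp.finsetSum_apply]
  have hinj : transpose.Injective :=
    fun F F' h => funext fun j => Finsupp.ext fun i => congrFun (congrFun h i) j
  calc #{F ∈ Fintype.piFinset s | ∑ j, F j = β}
      ≤ #(Fintype.piFinset fun i => piAntidiag univ (β i)) :=
        card_le_card_of_injOn _ hmaps hinj.injOn
    _ = ∏ i, #(piAntidiag univ (β i)) := Fintype.card_piFinset _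
    _ ≤ ∏ i, Fintype.card ι ^ β i := prod_le_prod' fun i _ => card_piAntidiag_le _ _
    _ = Fintype.card ι ^ β.degree := by rw [prod_pow_eq_pow_sum, Finsupp.degree_eq_sum]

namespace MvPolynomial

variable {R σ ι : Type*} [Fintype ι] [DecidableEq ι] [DecidableEq σ]

theorem coeff_prod_eq_sum_piFinset [CommSemiring R] (p : ι → MvPolynomial σ R) (β : σ →₀ ℕ) :
    coeff β (∏ j, p j) =
      ∑ F ∈ Fintype.piFinset (fun j => (p j).support) with ∑ j, F j = β,
        ∏ j, coeff (F j) (p j) := by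
  conv_lhs => rw [prod_congr rfl fun j _ => as_sum (p j), prod_univ_sum]
  simp only [← monomial_sum_prod, coeff_sum, coeff_monomial, sum_ite, sum_const_zero, add_zero]

theorem card_filter_piFinset_support_le [CommSemiring R] [Fintype σ] (p : ι → MvPolynomial σ R)
    (β : σ →₀ ℕ) :
    #{F ∈ Fintype.piFinset (fun j => (p j).support) | ∑ j, F j = β} ≤
      Fintype.card ι ^ ∑ j, (p j).totalDegree := by
  rcases isEmpty_or_nonempty ι with _ | _
  · simp only [Fintype.card_of_isEmpty, univ_eq_empty, sum_empty, pow_zero]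
    exact card_le_one.2 fun F _ F' _ => Subsingleton.elim F F'
  rcases eq_empty_or_nonempty {F ∈ Fintype.piFinset (fun j => (p j).support) | ∑ j, F j = β}
    with hempty | ⟨F, hF⟩
  · simp [hempty]
  simp only [mem_filter, Fintype.mem_piFinset] at hF
  have hdeg : β.degree ≤ ∑ j, (p j).totalDegree := by
    rw [← hF.2, map_sum]
    exact sum_le_sum fun j _ => le_totalDegree (hF.1 j)
  exact (Finset.card_filter_piFinset_sum_eq_le _ β).trans
    (Nat.pow_le_pow_right Fintype.card_pos hdeg)

variable [CommRing R] [LinearOrder R] [IsStrictOrderedRing R] [Fintype σ]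

theorem sq_coeff_prod_le (p : ι → MvPolynomial σ R) (β : σ →₀ ℕ) :
    coeff β (∏ j, p j) ^ 2 ≤ (Fintype.card ι : R) ^ (∑ j, (p j).totalDegree) *
      ∑ F ∈ Fintype.piFinset (fun j => (p j).support) with ∑ j, F j = β,
        ∏ j, coeff (F j) (p j) ^ 2 := by
  rw [coeff_prod_eq_sum_piFinset]
  refine sq_sum_le_card_mul_sum_sq.trans ?_
  simp only [prod_pow]
  gcongr
  exact_mod_cast card_filter_piFinset_support_le p β

theorem sum_sq_coeff_prod_le (p : ι → MvPolynomial σ R) :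
    ∑ β ∈ (∏ j, p j).support, coeff β (∏ j, p j) ^ 2 ≤
      (Fintype.card ι : R) ^ (∑ j, (p j).totalDegree) *
        ∏ j, ∑ α ∈ (p j).support, coeff α (p j) ^ 2 := by
  calc ∑ β ∈ (∏ j, p j).support, coeff β (∏ j, p j) ^ 2
      ≤ ∑ β ∈ (∏ j, p j).support, (Fintype.card ι : R) ^ (∑ j, (p j).totalDegree) *
          ∑ F ∈ Fintype.piFinset (fun j => (p j).support) with ∑ j, F j = β,
            ∏ j, coeff (F j) (p j) ^ 2 := sum_le_sum fun β _ => sq_coeff_prod_le p β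
    _ ≤ (Fintype.card ι : R) ^ (∑ j, (p j).totalDegree) *
          ∑ F ∈ Fintype.piFinset (fun j => (p j).support), ∏ j, coeff (F j) (p j) ^ 2 := by
      rw [← mul_sum]
      gcongr
      exact sum_fiberwise_le_sum_of_sum_fiber_nonneg fun _ _ =>
        sum_nonneg fun _ _ => prod_nonneg fun _ _ => sq_nonneg _
    _ = (Fintype.card ι : R) ^ (∑ j, (p j).totalDegree) *
          ∏ j, ∑ α ∈ (p j).support, coeff α (p j) ^ 2 := by rw [prod_univ_sum]

end MvPolynomial

theorem mvNorm_sq {d : ℕ} (p : MvPolynomial (Fin d) ℝ) :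
    mvNorm p ^ 2 = ∑ α ∈ p.support, MvPolynomial.coeff α p ^ 2 :=
  Real.sq_sqrt (sum_nonneg fun _ _ => sq_nonneg _)

/-- For multivariate polynomials `p_1, …, p_n` with product `p`,
`‖p‖² ≤ n^{Σ_j deg(p_j)} · Π_j ‖p_j‖²`. -/
theorem mvNorm_prod_sq_le {d n : ℕ} (p : Fin n → MvPolynomial (Fin d) ℝ) :
    (mvNorm (∏ j, p j)) ^ 2
      ≤ (n : ℝ) ^ (∑ j, (p j).totalDegree) * ∏ j, (mvNorm (p j)) ^ 2 := by
  simpa only [mvNorm_sq, Fintype.card_fin] using MvPolynomial.sum_sq_coeff_prod_le p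
end

section
/- Let q be a multivariate polynomial in d real variables of degree at most s, let n ≥ 1 be an integer, and let p(x) = (q(x))^n. Then ‖p‖² ≤ n^{n·s} · ‖q‖^{2n}. -/
open Finset

/-!
Let `Q` be the polynomial whose coefficients are the squares of those of `q`. By induction on `n`,
Cauchy–Schwarz applied to `coeff β (q * q ^ n) = ∑_{u + v = β} coeff u q * coeff v (q ^ n)`
with weights `n ^ |v|` gives `coeff β (q ^ n) ^ 2 ≤ n ^ |β| * coeff β (Q ^ n)`; the weights sum
to at most `(1 + n) ^ |β|`, the expansion of `∏ (1 + n)` over the multiset of `β`. On the support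
of `q ^ n` we have `|β| ≤ n s`, and the coefficients of `Q ^ n` sum to `Q(1, …, 1) ^ n = ‖q‖ ^ (2n)`.
-/

theorem Multiset.degree_toFinsupp {σ : Type*} [DecidableEq σ] (t : Multiset σ) :
    (Multiset.toFinsupp t).degree = t.card :=
  Multiset.toFinsupp_sum_eq t

theorem Finsupp.sum_antidiagonal_pow_degree_le {σ R : Type*} [DecidableEq σ] [CommSemiring R]
    [PartialOrder R] [IsOrderedRing R] {r : R} (hr : 0 ≤ r) (β : σ →₀ ℕ) :
    ∑ x ∈ antidiagonal β, r ^ x.2.degree ≤ (1 + r) ^ β.degree := by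
  set M := (toMultiset β).antidiagonal.map (Prod.map Multiset.toFinsupp Multiset.toFinsupp)
  calc ∑ x ∈ antidiagonal β, r ^ x.2.degree
      ≤ (M.map fun x => r ^ x.2.degree).sum := by
        -- `antidiagonal β` is, by construction, the set of splittings of the multiset of `β`
        rw [show antidiagonal β = M.toFinset from rfl, Finset.sum_multiset_map_count]
        gcongr with x hx
        exact le_smul_of_one_le_left (pow_nonneg hr _)
          (Multiset.one_le_count_iff_mem.2 (Multiset.mem_toFinset.1 hx))
    _ = ((toMultiset β).map fun _ => 1 + r).prod := by
        rw [Multiset.prod_map_add]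
        simp [M, Multiset.map_map, Multiset.map_const', Multiset.degree_toFinsupp]
    _ = (1 + r) ^ β.degree := by
        rw [Multiset.map_const', Multiset.prod_replicate, Finsupp.card_toMultiset]; rfl

namespace MvPolynomial

variable {σ R : Type*}

section CommSemiring

variable [CommSemiring R]

noncomputable def sqCoeffs (p : MvPolynomial σ R) : MvPolynomial σ R :=
  ∑ α ∈ p.support, monomial α (coeff α p ^ 2)

@[simp]
theorem coeff_sqCoeffs (p : MvPolynomial σ R) (α : σ →₀ ℕ) :
    coeff α (sqCoeffs p) = coeff α p ^ 2 := by
  classical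
  rw [sqCoeffs, coeff_sum]
  simp only [coeff_monomial, Finset.sum_ite_eq', mem_support_iff, ne_eq, ite_not]
  split_ifs with h <;> simp [h]

theorem eval_one_eq_sum_coeff (p : MvPolynomial σ R) : eval 1 p = ∑ α ∈ p.support, coeff α p := by
  simp [eval_eq]

theorem eval_one_sqCoeffs (p : MvPolynomial σ R) :
    eval 1 (sqCoeffs p) = ∑ α ∈ p.support, coeff α p ^ 2 := by
  simp [sqCoeffs, map_sum, eval_monomial]

end CommSemiring

section Ordered

variable [CommSemiring R] [PartialOrder R] [IsOrderedRing R]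

theorem coeff_pow_nonneg {p : MvPolynomial σ R} (hp : ∀ α, 0 ≤ coeff α p) (n : ℕ)
    (β : σ →₀ ℕ) : 0 ≤ coeff β (p ^ n) := by
  classical
  induction n generalizing β with
  | zero => rw [pow_zero, coeff_one]; split_ifs <;> simp
  | succ n ih =>
    rw [pow_succ, coeff_mul]
    exact sum_nonneg fun x _ => mul_nonneg (ih x.1) (hp x.2)

theorem sum_coeff_le_eval_one {p : MvPolynomial σ R} (hp : ∀ α, 0 ≤ coeff α p)
    (s : Finset (σ →₀ ℕ)) : ∑ α ∈ s, coeff α p ≤ eval 1 p := by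
  classical
  rw [eval_one_eq_sum_coeff, ← sum_filter_ne_zero]
  exact sum_le_sum_of_subset_of_nonneg (fun α hα => by simpa using (mem_filter.1 hα).2)
    fun α _ _ => hp α

end Ordered

section LinearOrdered

variable [CommRing R] [LinearOrder R] [IsStrictOrderedRing R]

theorem coeff_sqCoeffs_pow_nonneg (p : MvPolynomial σ R) (n : ℕ) (β : σ →₀ ℕ) :
    0 ≤ coeff β (sqCoeffs p ^ n) :=
  coeff_pow_nonneg (fun α => by simpa using sq_nonneg (coeff α p)) n β

theorem sq_coeff_mul_le [DecidableEq σ] {p r B : MvPolynomial σ R} {w : (σ →₀ ℕ) → R}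
    (hw : ∀ v, 0 ≤ w v) (hB : ∀ v, 0 ≤ coeff v B) (hr : ∀ v, coeff v r ^ 2 ≤ w v * coeff v B)
    (β : σ →₀ ℕ) :
    coeff β (p * r) ^ 2 ≤ (∑ x ∈ antidiagonal β, w x.2) * coeff β (sqCoeffs p * B) := by
  simp only [coeff_mul, coeff_sqCoeffs]
  refine sum_sq_le_sum_mul_sum_of_sq_le_mul _ (fun x _ => hw x.2)
    (fun x _ => mul_nonneg (sq_nonneg _) (hB x.2)) fun x _ => ?_
  rw [mul_pow]
  nlinarith [hr x.2, sq_nonneg (coeff x.1 p)]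

theorem sq_coeff_pow_le (q : MvPolynomial σ R) (n : ℕ) (β : σ →₀ ℕ) :
    coeff β (q ^ n) ^ 2 ≤ (n : R) ^ β.degree * coeff β (sqCoeffs q ^ n) := by
  classical
  induction n generalizing β with
  | zero =>
    rw [pow_zero, pow_zero, coeff_one]
    split_ifs with h
    · simp [← h]
    · simp
  | succ n ih =>
    have step := sq_coeff_mul_le (p := q) (fun v => by positivity)
      (coeff_sqCoeffs_pow_nonneg q n) ih β
    rw [← pow_succ', ← pow_succ'] at step
    refine step.trans (mul_le_mul_of_nonneg_right ?_ (coeff_sqCoeffs_pow_nonneg q _ β))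
    rw [Nat.cast_succ, add_comm]
    exact Finsupp.sum_antidiagonal_pow_degree_le n.cast_nonneg β

end LinearOrdered

end MvPolynomial

open MvPolynomial

theorem sq_mvNorm {d : ℕ} (p : MvPolynomial (Fin d) ℝ) :
    mvNorm p ^ 2 = ∑ α ∈ p.support, coeff α p ^ 2 :=
  Real.sq_sqrt (sum_nonneg fun _ _ => sq_nonneg _)

/-- If `q` has degree at most `s` and `n ≥ 1`, then
`‖q^n‖² ≤ n^{n·s} · ‖q‖^{2n}`. -/
theorem mvNorm_pow_sq_le {d n s : ℕ} (hn : 1 ≤ n) (q : MvPolynomial (Fin d) ℝ)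
    (hq : q.totalDegree ≤ s) :
    (mvNorm (q ^ n)) ^ 2 ≤ (n : ℝ) ^ (n * s) * (mvNorm q) ^ (2 * n) := by
  have hdeg {β} (hβ : β ∈ (q ^ n).support) : β.degree ≤ n * s :=
    (le_totalDegree hβ).trans ((totalDegree_pow q n).trans (Nat.mul_le_mul_left n hq))
  calc mvNorm (q ^ n) ^ 2 = ∑ β ∈ (q ^ n).support, coeff β (q ^ n) ^ 2 := sq_mvNorm _
    _ ≤ ∑ β ∈ (q ^ n).support, (n : ℝ) ^ (n * s) * coeff β (sqCoeffs q ^ n) := by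
      refine sum_le_sum fun β hβ => (sq_coeff_pow_le q n β).trans ?_
      gcongr
      · exact coeff_sqCoeffs_pow_nonneg q n β
      · exact_mod_cast hn
      · exact hdeg hβ
    _ ≤ (n : ℝ) ^ (n * s) * eval 1 (sqCoeffs q ^ n) := by
      rw [← mul_sum]
      gcongr
      exact sum_coeff_le_eval_one (coeff_sqCoeffs_pow_nonneg q n) _
    _ = (n : ℝ) ^ (n * s) * mvNorm q ^ (2 * n) := by
      rw [map_pow, eval_one_sqCoeffs, pow_mul (mvNorm q), sq_mvNorm]
end

section
/- Let γ ∈ (0, 1), let s = ⌈√(2/γ)⌉, and let z be a real number with z ≥ 1 + γ/2. Then the Chebyshev polynomial of the first kind satisfies T_s(z) ≥ 2. -/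
/-!
Write `z = cosh θ` with `θ ≥ 0`. Then `T_s(z) - 1 = cosh (sθ) - 1 = 2 sinh² (sθ/2)`, and since
`sinh (s x) ≥ s sinh x` for `x ≥ 0`, this is at least `2 s² sinh² (θ/2) = s² (z - 1)`.
As `s² ≥ 2/γ` and `z - 1 ≥ γ/2`, we get `T_s(z) ≥ 2`.
-/

open Real Polynomial.Chebyshev

theorem Real.natCast_mul_sinh_le_sinh_natCast_mul (n : ℕ) {x : ℝ} (hx : 0 ≤ x) :
    n * sinh x ≤ sinh (n * x) := by
  induction n with
  | zero => simp
  | succ n ih =>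
    calc ((n + 1 : ℕ) : ℝ) * sinh x = n * sinh x * 1 + 1 * sinh x := by push_cast; ring
      _ ≤ sinh (n * x) * cosh x + cosh (n * x) * sinh x := by
        have := one_le_cosh x
        have := one_le_cosh (n * x)
        gcongr
      _ = sinh ((n + 1 : ℕ) * x) := by rw [← sinh_add]; push_cast; ring_nf

theorem Real.cosh_eq_one_add_two_mul_sinh_half_sq (x : ℝ) :
    cosh x = 1 + 2 * sinh (x / 2) ^ 2 := by
  conv_lhs => rw [← mul_div_cancel₀ x (two_ne_zero' ℝ), cosh_two_mul, cosh_sq]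
  ring

theorem Polynomial.Chebyshev.one_add_sq_mul_sub_one_le_eval_T_real (n : ℤ) {x : ℝ}
    (hx : 1 ≤ x) : 1 + n ^ 2 * (x - 1) ≤ (T ℝ n).eval x := by
  set θ := arcosh x
  have hθ : 0 ≤ θ / 2 := by have := arcosh_nonneg hx; positivity
  have hsinh : n.natAbs * sinh (θ / 2) ≤ sinh (n.natAbs * (θ / 2)) :=
    natCast_mul_sinh_le_sinh_natCast_mul _ hθ
  have hsinh_nonneg : 0 ≤ n.natAbs * sinh (θ / 2) := by
    have := sinh_nonneg_iff.mpr hθ; positivity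
  have hn : (n : ℝ) ^ 2 = (n.natAbs : ℝ) ^ 2 := by
    rw [Nat.cast_natAbs, Int.cast_abs, sq_abs]
  rw [← cosh_arcosh hx, ← T_natAbs, T_real_cosh, hn, cosh_eq_one_add_two_mul_sinh_half_sq,
    cosh_eq_one_add_two_mul_sinh_half_sq, Int.cast_natCast, mul_div_assoc]
  nlinarith [pow_le_pow_left₀ hsinh_nonneg hsinh 2]

/-- For `γ ∈ (0,1)`, `s = ⌈√(2/γ)⌉` and `z ≥ 1 + γ/2`, one has
`T_s(z) ≥ 2`. -/
theorem chebyshev_T_ceil_sqrt_ge_two (γ : ℝ) (hγ : γ ∈ Set.Ioo (0 : ℝ) 1)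
    (z : ℝ) (hz : 1 + γ / 2 ≤ z) :
    (Polynomial.Chebyshev.T ℝ ((⌈Real.sqrt (2 / γ)⌉₊ : ℕ) : ℤ)).eval z ≥ 2 := by
  set s := ⌈√(2 / γ)⌉₊
  have hγ0 : 0 < γ := hγ.1
  have hs : 2 / γ ≤ (s : ℝ) ^ 2 := by
    rw [← sq_sqrt (by positivity : 0 ≤ 2 / γ)]
    exact pow_le_pow_left₀ (sqrt_nonneg _) (Nat.le_ceil _) 2
  calc (2 : ℝ) = 1 + 2 / γ * (γ / 2) := by field_simp; norm_num
    _ ≤ 1 + ((s : ℤ) : ℝ) ^ 2 * (z - 1) := by push_cast; gcongr; linarith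
    _ ≤ (T ℝ s).eval z := one_add_sq_mul_sub_one_le_eval_T_real s (by linarith)
end

section
/- Let s ≥ 1 be an integer and let v_b, v' ∈ ℝ^d with ‖v_b‖ ≤ 1 and ‖v'‖ ≤ 1. Consider the multivariate polynomial q : ℝ^d → ℝ defined by q(x) = T_s(1 − ⟨x − v_b, v'⟩/2), where T_s is the s-th Chebyshev polynomial of the first kind. Then ‖q‖² ≤ (105 s)^s. -/
open Finset RealInnerProductSpace

/-- The multivariate polynomial `x ↦ ⟨v, x⟩`. -/
noncomputable def innerPoly {d : ℕ} (v : EuclideanSpace ℝ (Fin d)) :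
    MvPolynomial (Fin d) ℝ :=
  ∑ i, MvPolynomial.C (v i) * MvPolynomial.X i

/-! Write `q = P(⟨x, v'⟩)` for the univariate `P = T_s ∘ g`, `g = 1 - (X - ⟨v_b, v'⟩)/2`, of
degree at most `s`. The ℓ¹-norm of coefficients is submultiplicative and `‖g‖₁ ≤ 2`, so the
Chebyshev recurrence gives `‖P‖₁ ≤ 5^s`. By the multinomial theorem the squared coefficients of
`⟨x, v⟩^k` are `(k!/α!)² v^{2α} ≤ k! · (k!/α!) (v²)^α`, and the right-hand sides sum to
`k! ‖v‖^{2k}`. Hence `‖q‖ ≤ ‖P‖₁ · √(s!) ≤ 5^s √(s!)`, and `25^s s! ≤ (105 s)^s`. -/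

namespace Polynomial

noncomputable def l1Norm (p : ℝ[X]) : ℝ := ∑ k ∈ p.support, |p.coeff k|

lemma l1Norm_eq_sum_of_support_subset {p : ℝ[X]} {s : Finset ℕ} (h : p.support ⊆ s) :
    l1Norm p = ∑ k ∈ s, |p.coeff k| :=
  sum_subset h fun k _ hk => by rw [notMem_support_iff.mp hk, abs_zero]

lemma l1Norm_nonneg (p : ℝ[X]) : 0 ≤ l1Norm p :=
  sum_nonneg fun _ _ => abs_nonneg _

@[simp] lemma l1Norm_zero : l1Norm 0 = 0 := by simp [l1Norm]

@[simp] lemma l1Norm_neg (p : ℝ[X]) : l1Norm (-p) = l1Norm p := by simp [l1Norm]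

lemma l1Norm_add_le (p q : ℝ[X]) : l1Norm (p + q) ≤ l1Norm p + l1Norm q := by
  classical
  rw [l1Norm_eq_sum_of_support_subset support_add,
    l1Norm_eq_sum_of_support_subset (subset_union_left (s₂ := q.support)),
    l1Norm_eq_sum_of_support_subset (subset_union_right (s₁ := p.support)), ← sum_add_distrib]
  exact sum_le_sum fun k _ => by simpa only [coeff_add] using abs_add_le _ _

lemma l1Norm_sub_le (p q : ℝ[X]) : l1Norm (p - q) ≤ l1Norm p + l1Norm q := by
  simpa [sub_eq_add_neg] using l1Norm_add_le p (-q)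

lemma l1Norm_sum_le {ι : Type*} (s : Finset ι) (f : ι → ℝ[X]) :
    l1Norm (∑ i ∈ s, f i) ≤ ∑ i ∈ s, l1Norm (f i) :=
  le_sum_of_subadditive _ l1Norm_zero.le l1Norm_add_le s f

lemma l1Norm_C_mul (a : ℝ) (p : ℝ[X]) : l1Norm (C a * p) = |a| * l1Norm p := by
  rw [← smul_eq_C_mul, l1Norm_eq_sum_of_support_subset (support_smul a p), l1Norm, mul_sum]
  simp only [coeff_smul, smul_eq_mul, abs_mul]

lemma l1Norm_X_pow_mul (n : ℕ) (p : ℝ[X]) : l1Norm (X ^ n * p) = l1Norm p := by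
  have h : (X ^ n * p).support ⊆ p.support.map (addRightEmbedding n) := by
    intro k hk
    rw [mem_support_iff, coeff_X_pow_mul'] at hk
    split_ifs at hk with hnk
    · exact mem_map.mpr ⟨k - n, mem_support_iff.mpr hk, Nat.sub_add_cancel hnk⟩
    · exact absurd rfl hk
  rw [l1Norm_eq_sum_of_support_subset h, sum_map]
  simp [l1Norm]

@[simp] lemma l1Norm_C (a : ℝ) : l1Norm (C a) = |a| := by
  simp [l1Norm_eq_sum_of_support_subset (support_C_subset a)]

@[simp] lemma l1Norm_one : l1Norm 1 = 1 := by
  simpa using l1Norm_C 1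

@[simp] lemma l1Norm_X : l1Norm X = 1 := by
  simpa using l1Norm_X_pow_mul 1 1

lemma l1Norm_mul_le (p q : ℝ[X]) : l1Norm (p * q) ≤ l1Norm p * l1Norm q :=
  calc l1Norm (p * q) = l1Norm (∑ k ∈ p.support, C (p.coeff k) * (X ^ k * q)) := by
        conv_lhs => rw [p.as_sum_support_C_mul_X_pow, sum_mul]
        simp only [mul_assoc]
    _ ≤ ∑ k ∈ p.support, l1Norm (C (p.coeff k) * (X ^ k * q)) := l1Norm_sum_le _ _
    _ = l1Norm p * l1Norm q := by simp only [l1Norm_C_mul, l1Norm_X_pow_mul, ← sum_mul]; rfl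

lemma l1Norm_chebyshev_T_comp_le (g : ℝ[X]) (n : ℕ) :
    l1Norm ((Chebyshev.T ℝ n).comp g) ≤ (2 * l1Norm g + 1) ^ n := by
  have hg := l1Norm_nonneg g
  induction n using Nat.twoStepInduction with
  | zero => simp
  | one => simp; linarith
  | more n ih₀ ih₁ =>
    have hT : (Chebyshev.T ℝ (n + 2 : ℕ)).comp g
        = C 2 * (g * (Chebyshev.T ℝ (n + 1 : ℕ)).comp g) - (Chebyshev.T ℝ n).comp g := by
      push_cast
      rw [Chebyshev.T_add_two, sub_comp, mul_comp, mul_comp, X_comp, ← map_ofNat C 2, C_comp,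
        mul_assoc]
    calc l1Norm ((Chebyshev.T ℝ (n + 2 : ℕ)).comp g)
        ≤ 2 * (l1Norm g * (2 * l1Norm g + 1) ^ (n + 1)) + (2 * l1Norm g + 1) ^ n := by
          rw [hT]
          refine (l1Norm_sub_le _ _).trans (add_le_add ?_ ih₀)
          rw [l1Norm_C_mul, abs_two]
          gcongr
          exact (l1Norm_mul_le _ _).trans (by gcongr)
      _ ≤ (2 * l1Norm g + 1) ^ (n + 2) := by
          have : 0 ≤ (2 * l1Norm g + 1) ^ n := by positivity
          rw [pow_succ, pow_succ, pow_succ]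
          nlinarith [mul_nonneg this hg]

lemma l1Norm_chebyshev_T_comp_affine_le {c : ℝ} (hc : |c| ≤ 1) (n : ℕ) :
    l1Norm ((Chebyshev.T ℝ n).comp (1 - C 2⁻¹ * (X - C c))) ≤ 5 ^ n := by
  have hg : l1Norm (1 - C 2⁻¹ * (X - C c)) ≤ 2 := by
    have hlin : l1Norm (X - C c) ≤ 1 + |c| := by simpa using l1Norm_sub_le X (C c)
    refine (l1Norm_sub_le _ _).trans ?_
    rw [l1Norm_one, l1Norm_C_mul, abs_of_pos (by norm_num : (0 : ℝ) < 2⁻¹)]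
    linarith
  refine (l1Norm_chebyshev_T_comp_le _ n).trans (pow_le_pow_left₀ ?_ ?_ n)
  · linarith [l1Norm_nonneg (1 - C 2⁻¹ * (X - C c))]
  · linarith

end Polynomial

open MvPolynomial
open scoped Nat

section LinearFormPow

variable {σ : Type*} [Fintype σ]

lemma coeff_sum_smul_X_pow_nonneg {a : σ → ℝ} (ha : ∀ i, 0 ≤ a i) (α : σ →₀ ℕ) (k : ℕ) :
    0 ≤ coeff α ((∑ i, a i • X i : MvPolynomial σ ℝ) ^ k) := by
  rw [coeff_linearCombination_X_pow_of_fintype]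
  split_ifs
  · exact mul_nonneg (Nat.cast_nonneg _) (prod_nonneg fun i _ => pow_nonneg (ha i) _)
  · exact le_rfl

lemma sq_coeff_sum_smul_X_pow_le (a : σ → ℝ) (α : σ →₀ ℕ) (k : ℕ) :
    coeff α ((∑ i, a i • X i : MvPolynomial σ ℝ) ^ k) ^ 2
      ≤ k ! * coeff α ((∑ i, a i ^ 2 • X i : MvPolynomial σ ℝ) ^ k) := by
  rw [coeff_linearCombination_X_pow_of_fintype, coeff_linearCombination_X_pow_of_fintype]
  split_ifs with hk
  · have hprod : (α.prod fun i m => a i ^ m) ^ 2 = α.prod fun i m => (a i ^ 2) ^ m := by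
      simp only [Finsupp.prod, ← prod_pow, ← pow_mul, mul_comm]
    have hmult : (α.multinomial : ℝ) ≤ k ! := by
      rw [← hk]
      exact_mod_cast Nat.div_le_self _ _
    rw [mul_pow, hprod, sq, mul_assoc]
    exact mul_le_mul_of_nonneg_right hmult
      (mul_nonneg (Nat.cast_nonneg _) (prod_nonneg fun i _ => by positivity))
  · simp

end LinearFormPow

section CoeffNorm

variable {d : ℕ}

lemma mvNorm_eq_norm_toLp {p : MvPolynomial (Fin d) ℝ} {s : Finset (Fin d →₀ ℕ)}
    (h : p.support ⊆ s) : mvNorm p = ‖WithLp.toLp 2 fun α : s => coeff α.1 p‖ := by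
  rw [EuclideanSpace.norm_eq, mvNorm,
    sum_subset h fun α _ hα => by rw [notMem_support_iff.mp hα, sq, mul_zero], ← sum_coe_sort s]
  simp [sq_abs]

@[simp] lemma mvNorm_zero : mvNorm (0 : MvPolynomial (Fin d) ℝ) = 0 := by simp [mvNorm]

lemma mvNorm_add_le (p q : MvPolynomial (Fin d) ℝ) : mvNorm (p + q) ≤ mvNorm p + mvNorm q := by
  classical
  rw [mvNorm_eq_norm_toLp support_add, mvNorm_eq_norm_toLp (subset_union_left (s₂ := q.support)),
    mvNorm_eq_norm_toLp (subset_union_right (s₁ := p.support))]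
  exact norm_add_le (WithLp.toLp 2 fun α : ↥(p.support ∪ q.support) => coeff α.1 p)
    (WithLp.toLp 2 fun α => coeff α.1 q)

lemma mvNorm_smul (c : ℝ) (p : MvPolynomial (Fin d) ℝ) : mvNorm (c • p) = |c| * mvNorm p := by
  rw [mvNorm_eq_norm_toLp (support_smul (a := c)), mvNorm_eq_norm_toLp subset_rfl,
    ← Real.norm_eq_abs, ← norm_smul]
  rfl

lemma mvNorm_sum_le {ι : Type*} (s : Finset ι) (f : ι → MvPolynomial (Fin d) ℝ) :
    mvNorm (∑ i ∈ s, f i) ≤ ∑ i ∈ s, mvNorm (f i) :=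
  le_sum_of_subadditive _ mvNorm_zero.le mvNorm_add_le s f

lemma mvNorm_aeval_le (p : Polynomial ℝ) (t : MvPolynomial (Fin d) ℝ) {B : ℝ}
    (h : ∀ k ∈ p.support, mvNorm (t ^ k) ≤ B) :
    mvNorm (Polynomial.aeval t p) ≤ p.l1Norm * B := by
  rw [Polynomial.aeval_def, Polynomial.eval₂_eq_sum, Polynomial.sum_def]
  calc mvNorm (∑ k ∈ p.support, algebraMap ℝ _ (p.coeff k) * t ^ k)
      ≤ ∑ k ∈ p.support, mvNorm (p.coeff k • t ^ k) := by
        simp only [← Algebra.smul_def]; exact mvNorm_sum_le _ _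
    _ ≤ ∑ k ∈ p.support, |p.coeff k| * B := sum_le_sum fun k hk => by
        rw [mvNorm_smul]; exact mul_le_mul_of_nonneg_left (h k hk) (abs_nonneg _)
    _ = p.l1Norm * B := (sum_mul _ _ _).symm

lemma innerPoly_eq_sum_smul_X (v : EuclideanSpace ℝ (Fin d)) :
    innerPoly v = ∑ i, v i • X i := by
  simp only [innerPoly, smul_eq_C_mul]

lemma mvNorm_sq_innerPoly_pow_le (v : EuclideanSpace ℝ (Fin d)) (k : ℕ) :
    mvNorm (innerPoly v ^ k) ^ 2 ≤ k ! * ‖v‖ ^ (2 * k) := by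
  set M : MvPolynomial (Fin d) ℝ := (∑ i, v i ^ 2 • X i) ^ k
  have hle α : coeff α (innerPoly v ^ k) ^ 2 ≤ k ! * coeff α M := by
    rw [innerPoly_eq_sum_smul_X]; exact sq_coeff_sum_smul_X_pow_le _ α k
  have hM α : 0 ≤ coeff α M := coeff_sum_smul_X_pow_nonneg (fun i => sq_nonneg (v i)) α k
  have hsupp : (innerPoly v ^ k).support ⊆ M.support := fun α hα => by
    rw [mem_support_iff] at hα ⊢
    have hpos : 0 < coeff α (innerPoly v ^ k) ^ 2 := by positivity
    exact (pos_of_mul_pos_right (hpos.trans_le (hle α)) (Nat.cast_nonneg _)).ne'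
  have hsum : ∑ α ∈ M.support, coeff α M = ‖v‖ ^ (2 * k) := by
    have := eval_eq (fun _ => (1 : ℝ)) M
    simp only [one_pow, prod_const_one, mul_one] at this
    rw [← this, pow_mul, EuclideanSpace.norm_sq_eq]
    simp [M, Real.norm_eq_abs, sq_abs]
  calc mvNorm (innerPoly v ^ k) ^ 2
      = ∑ α ∈ (innerPoly v ^ k).support, coeff α (innerPoly v ^ k) ^ 2 :=
        Real.sq_sqrt (sum_nonneg fun _ _ => sq_nonneg _)
    _ ≤ ∑ α ∈ (innerPoly v ^ k).support, k ! * coeff α M := sum_le_sum fun α _ => hle α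
    _ ≤ ∑ α ∈ M.support, k ! * coeff α M :=
        sum_le_sum_of_subset_of_nonneg hsupp fun α _ _ => mul_nonneg (Nat.cast_nonneg _) (hM α)
    _ = k ! * ‖v‖ ^ (2 * k) := by rw [← mul_sum, hsum]

lemma mvNorm_innerPoly_pow_le_sqrt_factorial {v : EuclideanSpace ℝ (Fin d)} (hv : ‖v‖ ≤ 1)
    {k n : ℕ} (hkn : k ≤ n) : mvNorm (innerPoly v ^ k) ≤ √(n !) := by
  refine Real.le_sqrt_of_sq_le ((mvNorm_sq_innerPoly_pow_le v k).trans ?_)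
  calc (k ! : ℝ) * ‖v‖ ^ (2 * k) ≤ k ! * 1 := by gcongr; exact pow_le_one₀ (norm_nonneg v) hv
    _ ≤ n ! := by rw [mul_one]; exact_mod_cast Nat.factorial_le hkn

end CoeffNorm

theorem mvNorm_sq_chebyshev_comp_shifted_inner_le_general {d s : ℕ}
    (vb v' : EuclideanSpace ℝ (Fin d)) (hvb : ‖vb‖ ≤ 1) (hv' : ‖v'‖ ≤ 1) :
    (mvNorm (Polynomial.aeval
        (1 - MvPolynomial.C (2 : ℝ)⁻¹ * (innerPoly v' - MvPolynomial.C ⟪vb, v'⟫))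
        (Polynomial.Chebyshev.T ℝ (s : ℤ)))) ^ 2
      ≤ (105 * (s : ℝ)) ^ s := by
  set P : Polynomial ℝ := (Polynomial.Chebyshev.T ℝ s).comp
    (1 - Polynomial.C 2⁻¹ * (Polynomial.X - Polynomial.C ⟪vb, v'⟫))
  have hc : |⟪vb, v'⟫| ≤ 1 :=
    (abs_real_inner_le_norm vb v').trans (mul_le_one₀ hvb (norm_nonneg _) hv')
  have hq : Polynomial.aeval (1 - C 2⁻¹ * (innerPoly v' - C ⟪vb, v'⟫))
      (Polynomial.Chebyshev.T ℝ s) = Polynomial.aeval (innerPoly v') P := by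
    simp [P, Polynomial.aeval_comp, algebraMap_eq]
  have hdeg : P.natDegree ≤ s := by
    refine Polynomial.natDegree_comp_le.trans ?_
    rw [Polynomial.Chebyshev.natDegree_T, Int.natAbs_natCast]
    exact mul_le_of_le_one_right (Nat.zero_le s) (by compute_degree)
  have hnorm : mvNorm (Polynomial.aeval (innerPoly v') P) ≤ 5 ^ s * √(s !) :=
    (mvNorm_aeval_le P _ fun k hk => mvNorm_innerPoly_pow_le_sqrt_factorial hv'
      ((Polynomial.le_natDegree_of_mem_supp k hk).trans hdeg)).trans
    (by gcongr; exact Polynomial.l1Norm_chebyshev_T_comp_affine_le hc s)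
  rw [hq]
  calc _ ≤ (5 ^ s * √(s !)) ^ 2 := pow_le_pow_left₀ (Real.sqrt_nonneg _) hnorm 2
    _ = 25 ^ s * s ! := by rw [mul_pow, Real.sq_sqrt (by positivity), ← pow_mul, pow_mul']; norm_num
    _ ≤ 105 ^ s * s ^ s := by gcongr <;> [norm_num; exact_mod_cast Nat.factorial_le_pow s]
    _ = (105 * s) ^ s := (mul_pow _ _ _).symm

/-- For `s ≥ 1`, `‖v_b‖ ≤ 1`, `‖v'‖ ≤ 1`, the multivariate polynomial
`q(x) = T_s(1 − ⟨x − v_b, v'⟩/2)` satisfies `‖q‖² ≤ (105 s)^s`. -/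
theorem mvNorm_sq_chebyshev_comp_shifted_inner_le {d s : ℕ} (hs : 1 ≤ s)
    (vb v' : EuclideanSpace ℝ (Fin d)) (hvb : ‖vb‖ ≤ 1) (hv' : ‖v'‖ ≤ 1) :
    (mvNorm (Polynomial.aeval
        (1 - MvPolynomial.C (2 : ℝ)⁻¹ * (innerPoly v' - MvPolynomial.C ⟪vb, v'⟫))
        (Polynomial.Chebyshev.T ℝ (s : ℤ)))) ^ 2
      ≤ (105 * (s : ℝ)) ^ s :=
  mvNorm_sq_chebyshev_comp_shifted_inner_le_general vb v' hvb hv'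
end

section
/- Let γ ∈ (0,1), let m ≥ 1, let r = ⌈log₂(2m+4)⌉ and s = ⌈√(2/γ)⌉. Let v_1, …, v_m, v_b, v_t, v' ∈ ℝ^d each of Euclidean norm at most 1, and define the polynomial p : ℝ^d → ℝ by p(x) = m + 5/2 − Σ_{i=1}^m (T_s(1 − ⟨v_i, x⟩))^r − (T_s(1 − ⟨x − v_b, v'⟩/2))^r − (T_s(1 − ⟨v_t − x, v'⟩/2))^r, where T_s is the s-th Chebyshev polynomial of the first kind. Then for every x ∈ ℝ^d with ‖x‖ ≤ 1 such that ⟨v_i, x⟩ ≥ γ for all i ∈ {1,…,m}, ⟨x, v'⟩ ≥ ⟨v_b, v'⟩ + γ, and ⟨x, v'⟩ ≤ ⟨v_t, v'⟩ − γ, it holds that p(x) ≥ 1/2. -/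
open Finset RealInnerProductSpace

/-! On the positive region every Chebyshev argument of `p` lies in `[-1, 1]`, where `|T_s| ≤ 1`;
so each of the `m + 2` subtracted powers is at most `1`, leaving `p(x) ≥ 1/2`. -/

namespace Polynomial.Chebyshev

theorem eval_T_real_one_sub_pow_le_one (n : ℤ) (r : ℕ) {t : ℝ} (ht₀ : 0 ≤ t) (ht₂ : t ≤ 2) :
    (T ℝ n).eval (1 - t) ^ r ≤ 1 :=
  calc (T ℝ n).eval (1 - t) ^ r ≤ |(T ℝ n).eval (1 - t)| ^ r := by
        rw [← abs_pow]; exact le_abs_self _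
    _ ≤ 1 := pow_le_one₀ (abs_nonneg _) <|
        abs_eval_T_real_le_one n (abs_le.mpr ⟨by linarith, by linarith⟩)

end Polynomial.Chebyshev

theorem abs_real_inner_le_one {E : Type*} [NormedAddCommGroup E] [InnerProductSpace ℝ E]
    {u w : E} (hu : ‖u‖ ≤ 1) (hw : ‖w‖ ≤ 1) : |⟪u, w⟫| ≤ 1 :=
  (abs_real_inner_le_norm u w).trans (mul_le_one₀ hu (norm_nonneg _) hw)

theorem sep_poly_eval_ge_half_general {d m : ℕ} (γ : ℝ)
    (hγ : γ ∈ Set.Ioo (0 : ℝ) 1)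
    (r s : ℕ)
    (v : Fin m → EuclideanSpace ℝ (Fin d)) (vb vt v' : EuclideanSpace ℝ (Fin d))
    (hv : ∀ i, ‖v i‖ ≤ 1) (hvb : ‖vb‖ ≤ 1) (hvt : ‖vt‖ ≤ 1) (hv' : ‖v'‖ ≤ 1)
    (x : EuclideanSpace ℝ (Fin d)) (hx : ‖x‖ ≤ 1)
    (h1 : ∀ i, ⟪v i, x⟫ ≥ γ)
    (h2 : ⟪x, v'⟫ ≥ ⟪vb, v'⟫ + γ)
    (h3 : ⟪x, v'⟫ ≤ ⟪vt, v'⟫ - γ) :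
    (m : ℝ) + 5 / 2
      - ∑ i, ((Polynomial.Chebyshev.T ℝ (s : ℤ)).eval (1 - ⟪v i, x⟫)) ^ r
      - ((Polynomial.Chebyshev.T ℝ (s : ℤ)).eval (1 - ⟪x - vb, v'⟫ / 2)) ^ r
      - ((Polynomial.Chebyshev.T ℝ (s : ℤ)).eval (1 - ⟪vt - x, v'⟫ / 2)) ^ r
      ≥ 1 / 2 := by
  have hT {t : ℝ} (ht₀ : 0 ≤ t) (ht₂ : t ≤ 2) :=
    Polynomial.Chebyshev.eval_T_real_one_sub_pow_le_one (s : ℤ) r ht₀ ht₂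
  have hsum : ∑ i, ((Polynomial.Chebyshev.T ℝ (s : ℤ)).eval (1 - ⟪v i, x⟫)) ^ r ≤ m :=
    calc _ ≤ ∑ _i : Fin m, (1 : ℝ) := sum_le_sum fun i _ =>
          hT (by linarith [h1 i, hγ.1]) (by linarith [abs_le.mp (abs_real_inner_le_one (hv i) hx)])
      _ = m := by simp
  have hxv' := abs_le.mp (abs_real_inner_le_one hx hv')
  have hvbv' := abs_le.mp (abs_real_inner_le_one hvb hv')
  have hvtv' := abs_le.mp (abs_real_inner_le_one hvt hv')
  have hbottom : ((Polynomial.Chebyshev.T ℝ (s : ℤ)).eval (1 - ⟪x - vb, v'⟫ / 2)) ^ r ≤ 1 :=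
    hT (by rw [inner_sub_left]; linarith [hγ.1]) (by rw [inner_sub_left]; linarith)
  have htop : ((Polynomial.Chebyshev.T ℝ (s : ℤ)).eval (1 - ⟪vt - x, v'⟫ / 2)) ^ r ≤ 1 :=
    hT (by rw [inner_sub_left]; linarith [hγ.1]) (by rw [inner_sub_left]; linarith)
  linarith

/-- With `r = ⌈log₂(2m+4)⌉`, `s = ⌈√(2/γ)⌉` and unit-norm vectors
`v_1, …, v_m, v_b, v_t, v'`, the function
`p(x) = m + 5/2 − Σ_i T_s(1 − ⟨v_i,x⟩)^r − T_s(1 − ⟨x−v_b,v'⟩/2)^r − T_s(1 − ⟨v_t−x,v'⟩/2)^r`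
satisfies `p(x) ≥ 1/2` on the positive region. -/
theorem sep_poly_eval_ge_half {d m : ℕ} (hm : 1 ≤ m) (γ : ℝ)
    (hγ : γ ∈ Set.Ioo (0 : ℝ) 1)
    (r s : ℕ) (hr : r = ⌈Real.logb 2 (2 * m + 4)⌉₊) (hs : s = ⌈Real.sqrt (2 / γ)⌉₊)
    (v : Fin m → EuclideanSpace ℝ (Fin d)) (vb vt v' : EuclideanSpace ℝ (Fin d))
    (hv : ∀ i, ‖v i‖ ≤ 1) (hvb : ‖vb‖ ≤ 1) (hvt : ‖vt‖ ≤ 1) (hv' : ‖v'‖ ≤ 1)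
    (x : EuclideanSpace ℝ (Fin d)) (hx : ‖x‖ ≤ 1)
    (h1 : ∀ i, ⟪v i, x⟫ ≥ γ)
    (h2 : ⟪x, v'⟫ ≥ ⟪vb, v'⟫ + γ)
    (h3 : ⟪x, v'⟫ ≤ ⟪vt, v'⟫ - γ) :
    (m : ℝ) + 5 / 2
      - ∑ i, ((Polynomial.Chebyshev.T ℝ (s : ℤ)).eval (1 - ⟪v i, x⟫)) ^ r
      - ((Polynomial.Chebyshev.T ℝ (s : ℤ)).eval (1 - ⟪x - vb, v'⟫ / 2)) ^ r
      - ((Polynomial.Chebyshev.T ℝ (s : ℤ)).eval (1 - ⟪vt - x, v'⟫ / 2)) ^ r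
      ≥ 1 / 2 :=
  sep_poly_eval_ge_half_general γ hγ r s v vb vt v' hv hvb hvt hv' x hx h1 h2 h3
end

section
/- Let γ ∈ (0,1), let m ≥ 1, let r = ⌈log₂(2m+4)⌉ and s = ⌈√(2/γ)⌉. Let v_1, …, v_m, v_b, v_t, v' ∈ ℝ^d each of Euclidean norm at most 1, and define the polynomial p : ℝ^d → ℝ by p(x) = m + 5/2 − Σ_{i=1}^m (T_s(1 − ⟨v_i, x⟩))^r − (T_s(1 − ⟨x − v_b, v'⟩/2))^r − (T_s(1 − ⟨v_t − x, v'⟩/2))^r, where T_s is the s-th Chebyshev polynomial of the first kind. Then for every x ∈ ℝ^d with ‖x‖ ≤ 1 such that at least one of the following holds: (i) ⟨v_i, x⟩ ≤ −γ for some i ∈ {1,…,m}, (ii) ⟨x, v'⟩ ≤ ⟨v_b, v'⟩ − γ, or (iii) ⟨x, v'⟩ ≥ ⟨v_t, v'⟩ + γ, it holds that p(x) ≤ −1/2. -/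
open Finset RealInnerProductSpace

/-!
All `m + 2` arguments of `T_s` are `≥ 0` by Cauchy–Schwarz, so each term `T_s(·)^r` is `≥ -1`:
`|T_s| ≤ 1` on `[-1, 1]` and `T_s ≥ 1` on `[1, ∞)`. In each of the cases (i)–(iii) one argument
is `≥ 1 + γ/2`, and the growth bound `T_s(y) ≥ 1 + s²(y - 1)` together with `s² ≥ 2/γ` makes
`T_s ≥ 2` there, so that term is `≥ 2^r ≥ 2m + 4`. The subtracted sum is therefore at least
`(2m + 4) - (m + 1) = m + 3`.
-/

namespace Polynomial.Chebyshev

/-- `T_{n+2} - T_{n+1} = (T_{n+1} - T_n) + 2(y - 1) T_{n+1}`, and `T_{n+1}(y) ≥ 1`. -/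
lemma mul_sub_one_le_eval_T_succ_sub_eval_T (n : ℕ) {y : ℝ} (hy : 1 ≤ y) :
    (2 * n + 1) * (y - 1) ≤ (T ℝ (n + 1)).eval y - (T ℝ n).eval y := by
  induction n with
  | zero => simp [T_one]
  | succ n ih =>
    have hrec : (T ℝ ((n : ℤ) + 2)).eval y
        = 2 * y * (T ℝ ((n : ℤ) + 1)).eval y - (T ℝ n).eval y := by
      simp [T_add_two]
    have hone := one_le_eval_T_real ((n : ℤ) + 1) hy
    push_cast
    rw [add_assoc (n : ℤ) 1 1, one_add_one_eq_two, hrec]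
    nlinarith

lemma one_add_sq_mul_sub_one_le_eval_T (n : ℕ) {y : ℝ} (hy : 1 ≤ y) :
    1 + n ^ 2 * (y - 1) ≤ (T ℝ n).eval y := by
  induction n with
  | zero => simp [T_zero]
  | succ n ih =>
    have hstep := mul_sub_one_le_eval_T_succ_sub_eval_T n hy
    push_cast at hstep ⊢
    nlinarith

lemma neg_one_le_eval_T_pow (n : ℤ) (k : ℕ) {y : ℝ} (hy : -1 ≤ y) :
    -1 ≤ (T ℝ n).eval y ^ k := by
  rcases le_or_gt y 1 with hy1 | hy1
  · have h := abs_eval_T_real_le_one n (abs_le.mpr ⟨hy, hy1⟩)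
    have hk : |(T ℝ n).eval y ^ k| ≤ 1 := by
      rw [abs_pow]; exact pow_le_one₀ (abs_nonneg _) h
    exact (abs_le.mp hk).1
  · linarith [one_le_pow₀ (n := k) (one_le_eval_T_real n hy1.le)]

lemma two_pow_le_eval_T_pow (n k : ℕ) {y : ℝ} (h : 1 ≤ n ^ 2 * (y - 1)) :
    2 ^ k ≤ (T ℝ n).eval y ^ k := by
  have hy : 1 ≤ y := by
    by_contra! hy
    nlinarith [sq_nonneg (n : ℝ)]
  have := one_add_sq_mul_sub_one_le_eval_T n hy
  exact pow_le_pow_left₀ zero_le_two (by linarith) k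

end Polynomial.Chebyshev

lemma le_pow_natCeil_logb {b x : ℝ} (hb : 1 < b) (hx : 0 < x) :
    x ≤ b ^ ⌈Real.logb b x⌉₊ :=
  calc x = b ^ Real.logb b x := (Real.rpow_logb (by linarith) hb.ne' hx).symm
    _ ≤ b ^ (⌈Real.logb b x⌉₊ : ℝ) := Real.rpow_le_rpow_of_exponent_le hb.le (Nat.le_ceil _)
    _ = b ^ ⌈Real.logb b x⌉₊ := Real.rpow_natCast _ _

lemma le_natCeil_sqrt_sq (x : ℝ) : x ≤ (⌈√x⌉₊ : ℝ) ^ 2 :=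
  (Real.sqrt_le_iff.mp (Nat.le_ceil _)).2

lemma real_inner_le_of_norm_le {E : Type*} [NormedAddCommGroup E] [InnerProductSpace ℝ E]
    {a b : E} {A : ℝ} (ha : ‖a‖ ≤ A) (hb : ‖b‖ ≤ 1) : ⟪a, b⟫ ≤ A :=
  (real_inner_le_norm a b).trans ((mul_le_of_le_one_right (norm_nonneg a) hb).trans ha)

lemma sub_card_add_one_le_sum_add_add {ι : Type*} [Fintype ι] {a : ι → ℝ} {b c B : ℝ}
    (ha : ∀ i, -1 ≤ a i) (hb : -1 ≤ b) (hc : -1 ≤ c) (hB : (∃ i, B ≤ a i) ∨ B ≤ b ∨ B ≤ c) :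
    B - (Fintype.card ι + 1) ≤ ∑ i, a i + b + c := by
  have hshift : ∑ i, a i = ∑ i, (a i + 1) - Fintype.card ι := by
    simp [sum_add_distrib]
  have hnonneg : ∀ i ∈ univ, 0 ≤ a i + 1 := fun i _ => by linarith [ha i]
  rcases hB with ⟨i₀, hi₀⟩ | hB
  · have := single_le_sum hnonneg (mem_univ i₀)
    linarith
  · have := sum_nonneg hnonneg
    rcases hB with hB | hB <;> linarith

open Polynomial.Chebyshev in
theorem sep_poly_eval_le_neg_half_general {d m : ℕ} (γ : ℝ)
    (hγ : γ ∈ Set.Ioo (0 : ℝ) 1)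
    (r s : ℕ) (hr : r = ⌈Real.logb 2 (2 * m + 4)⌉₊) (hs : s = ⌈Real.sqrt (2 / γ)⌉₊)
    (v : Fin m → EuclideanSpace ℝ (Fin d)) (vb vt v' : EuclideanSpace ℝ (Fin d))
    (hv : ∀ i, ‖v i‖ ≤ 1) (hvb : ‖vb‖ ≤ 1) (hvt : ‖vt‖ ≤ 1) (hv' : ‖v'‖ ≤ 1)
    (x : EuclideanSpace ℝ (Fin d)) (hx : ‖x‖ ≤ 1)
    (h : (∃ i, ⟪v i, x⟫ ≤ -γ) ∨ ⟪x, v'⟫ ≤ ⟪vb, v'⟫ - γ ∨ ⟪x, v'⟫ ≥ ⟪vt, v'⟫ + γ) :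
    (m : ℝ) + 5 / 2
      - ∑ i, ((Polynomial.Chebyshev.T ℝ (s : ℤ)).eval (1 - ⟪v i, x⟫)) ^ r
      - ((Polynomial.Chebyshev.T ℝ (s : ℤ)).eval (1 - ⟪x - vb, v'⟫ / 2)) ^ r
      - ((Polynomial.Chebyshev.T ℝ (s : ℤ)).eval (1 - ⟪vt - x, v'⟫ / 2)) ^ r
      ≤ -(1 / 2) := by
  obtain ⟨hγ0, -⟩ := hγ
  have hs_sq : 2 / γ ≤ (s : ℝ) ^ 2 := hs ▸ le_natCeil_sqrt_sq _
  have hlarge : ∀ y, 1 + γ / 2 ≤ y → (2 * m + 4 : ℝ) ≤ (T ℝ s).eval y ^ r := fun y hy =>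
    calc (2 * m + 4 : ℝ) ≤ 2 ^ r := hr ▸ le_pow_natCeil_logb one_lt_two (by positivity)
      _ ≤ (T ℝ s).eval y ^ r := two_pow_le_eval_T_pow s r <|
        calc (1 : ℝ) = 2 / γ * (γ / 2) := by field_simp
          _ ≤ s ^ 2 * (y - 1) := mul_le_mul hs_sq (by linarith) (by positivity) (by positivity)
  have hb : ‖x - vb‖ ≤ 2 := (norm_sub_le _ _).trans (by linarith)
  have ht : ‖vt - x‖ ≤ 2 := (norm_sub_le _ _).trans (by linarith)
  have hone_large : (∃ i, (2 * m + 4 : ℝ) ≤ (T ℝ s).eval (1 - ⟪v i, x⟫) ^ r)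
      ∨ (2 * m + 4 : ℝ) ≤ (T ℝ s).eval (1 - ⟪x - vb, v'⟫ / 2) ^ r
      ∨ (2 * m + 4 : ℝ) ≤ (T ℝ s).eval (1 - ⟪vt - x, v'⟫ / 2) ^ r := by
    simp only [inner_sub_left] at h ⊢
    rcases h with ⟨i, hi⟩ | h | h
    exacts [.inl ⟨i, hlarge _ (by linarith)⟩, .inr (.inl (hlarge _ (by linarith))),
      .inr (.inr (hlarge _ (by linarith)))]
  have key := sub_card_add_one_le_sum_add_add
    (fun i => neg_one_le_eval_T_pow s r (by linarith [real_inner_le_of_norm_le (hv i) hx]))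
    (neg_one_le_eval_T_pow s r (by linarith [real_inner_le_of_norm_le hb hv']))
    (neg_one_le_eval_T_pow s r (by linarith [real_inner_le_of_norm_le ht hv'])) hone_large
  rw [Fintype.card_fin] at key
  linarith

/-- With `r = ⌈log₂(2m+4)⌉`, `s = ⌈√(2/γ)⌉` and unit-norm vectors
`v_1, …, v_m, v_b, v_t, v'`, the function
`p(x) = m + 5/2 − Σ_i T_s(1 − ⟨v_i,x⟩)^r − T_s(1 − ⟨x−v_b,v'⟩/2)^r − T_s(1 − ⟨v_t−x,v'⟩/2)^r`
satisfies `p(x) ≤ −1/2` on the negative region. -/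
theorem sep_poly_eval_le_neg_half {d m : ℕ} (hm : 1 ≤ m) (γ : ℝ)
    (hγ : γ ∈ Set.Ioo (0 : ℝ) 1)
    (r s : ℕ) (hr : r = ⌈Real.logb 2 (2 * m + 4)⌉₊) (hs : s = ⌈Real.sqrt (2 / γ)⌉₊)
    (v : Fin m → EuclideanSpace ℝ (Fin d)) (vb vt v' : EuclideanSpace ℝ (Fin d))
    (hv : ∀ i, ‖v i‖ ≤ 1) (hvb : ‖vb‖ ≤ 1) (hvt : ‖vt‖ ≤ 1) (hv' : ‖v'‖ ≤ 1)
    (x : EuclideanSpace ℝ (Fin d)) (hx : ‖x‖ ≤ 1)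
    (h : (∃ i, ⟪v i, x⟫ ≤ -γ) ∨ ⟪x, v'⟫ ≤ ⟪vb, v'⟫ - γ ∨ ⟪x, v'⟫ ≥ ⟪vt, v'⟫ + γ) :
    (m : ℝ) + 5 / 2
      - ∑ i, ((Polynomial.Chebyshev.T ℝ (s : ℤ)).eval (1 - ⟪v i, x⟫)) ^ r
      - ((Polynomial.Chebyshev.T ℝ (s : ℤ)).eval (1 - ⟪x - vb, v'⟫ / 2)) ^ r
      - ((Polynomial.Chebyshev.T ℝ (s : ℤ)).eval (1 - ⟪vt - x, v'⟫ / 2)) ^ r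
      ≤ -(1 / 2) :=
  sep_poly_eval_le_neg_half_general γ hγ r s hr hs v vb vt v' hv hvb hvt hv' x hx h
end

section
/- Let x ∈ ℝ^d with ‖x‖ ≤ 1. Then the family of real numbers (φ(x)_α²), indexed over all d-tuples α of non-negative integers, is summable with sum Σ_α φ(x)_α² = 1/(1 − ‖x‖²/2); in particular φ(x) ∈ ℓ² and Σ_α φ(x)_α² ≤ 2. -/
open Finset

/-- The feature map `φ` of the rational kernel: for `x ∈ ℝ^d` and a multi-index
`α = (α_1,…,α_d)`,
`φ(x)_α = x_1^{α_1}⋯x_d^{α_d} · sqrt(2^{−Σα_i} · (Σα_i)! / Πα_i!)`. -/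
noncomputable def phi {d : ℕ} (x : EuclideanSpace ℝ (Fin d)) (α : Fin d → ℕ) : ℝ :=
  (∏ i, x i ^ α i) *
    Real.sqrt ((2 : ℝ)⁻¹ ^ (∑ i, α i) *
      ((∑ i, α i).factorial : ℝ) / ∏ i, ((α i).factorial : ℝ))

/-!
By the definition of `φ`, `φ(x)_α² = multinomial(α) · ∏ᵢ (xᵢ²/2)^{αᵢ}`, so by the multinomial
theorem the multi-indices of total degree `n` contribute `(‖x‖²/2)^n`. Grouping the nonnegative
family by total degree therefore turns it into a geometric series with ratio `‖x‖²/2 ≤ 1/2`.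
-/

def sigmaPiAntidiagEquiv (ι : Type*) [Fintype ι] [DecidableEq ι] :
    (Σ n : ℕ, piAntidiag (univ : Finset ι) n) ≃ (ι → ℕ) where
  toFun p := p.2
  invFun α := ⟨∑ i, α i, α, by simp [mem_piAntidiag]⟩
  left_inv := by
    rintro ⟨n, α, hα⟩
    obtain ⟨rfl, -⟩ := mem_piAntidiag.1 hα
    rfl
  right_inv _ := rfl

theorem hasSum_of_hasSum_sum_piAntidiag {ι : Type*} [Fintype ι] [DecidableEq ι]
    {f : (ι → ℕ) → ℝ} (hf : 0 ≤ f) {a : ℝ}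
    (h : HasSum (fun n => ∑ α ∈ piAntidiag univ n, f α) a) : HasSum f a := by
  rw [← (sigmaPiAntidiagEquiv ι).hasSum_iff]
  have hfiber (n : ℕ) : HasSum (fun α : piAntidiag (univ : Finset ι) n => f α)
      (∑ α ∈ piAntidiag univ n, f α) := (piAntidiag univ n).hasSum f
  have hsum : Summable (f ∘ sigmaPiAntidiagEquiv ι) :=
    (summable_sigma_of_nonneg fun _ => hf _).2
      ⟨fun n => (hfiber n).summable, h.summable.congr fun n => (hfiber n).tsum_eq.symm⟩
  rw [h.unique (hsum.hasSum.sigma hfiber)]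
  exact hsum.hasSum

theorem phi_sq {d : ℕ} (x : EuclideanSpace ℝ (Fin d)) (α : Fin d → ℕ) :
    phi x α ^ 2 = Nat.multinomial univ α * ∏ i, (x i ^ 2 / 2) ^ α i := by
  have hmultinomial : ((∑ i, α i).factorial : ℝ) / ∏ i, ((α i).factorial : ℝ) =
      Nat.multinomial univ α := by
    rw [div_eq_iff (by positivity), ← Nat.cast_prod, ← Nat.cast_mul, mul_comm,
      Nat.multinomial_spec]
  rw [phi, mul_pow, Real.sq_sqrt (by positivity), mul_div_assoc, hmultinomial,
    ← prod_pow_eq_pow_sum, ← prod_pow]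
  simp only [div_eq_mul_inv, mul_pow, prod_mul_distrib, ← pow_mul, mul_comm 2]
  ring

theorem sum_piAntidiag_phi_sq {d : ℕ} (x : EuclideanSpace ℝ (Fin d)) (n : ℕ) :
    ∑ α ∈ piAntidiag univ n, phi x α ^ 2 = (‖x‖ ^ 2 / 2) ^ n := by
  simp only [phi_sq, EuclideanSpace.real_norm_sq_eq, sum_div, sum_pow_eq_sum_piAntidiag]

theorem hasSum_phi_sq {d : ℕ} (x : EuclideanSpace ℝ (Fin d)) (hx : ‖x‖ ^ 2 < 2) :
    HasSum (fun α => phi x α ^ 2) (1 - ‖x‖ ^ 2 / 2)⁻¹ :=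
  hasSum_of_hasSum_sum_piAntidiag (fun _ => sq_nonneg _) <| by
    simpa only [sum_piAntidiag_phi_sq] using
      hasSum_geometric_of_lt_one (by positivity) (by linarith)

/-- For `‖x‖ ≤ 1` the family `(φ(x)_α²)` is summable with sum
`1/(1 − ‖x‖²/2)`; in particular `φ(x) ∈ ℓ²` and the sum is at most `2`. -/
theorem phi_sq_summable_tsum {d : ℕ} (x : EuclideanSpace ℝ (Fin d)) (hx : ‖x‖ ≤ 1) :
    Summable (fun α : Fin d → ℕ => (phi x α) ^ 2) ∧
    (∑' α : Fin d → ℕ, (phi x α) ^ 2) = 1 / (1 - ‖x‖ ^ 2 / 2) ∧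
    (∑' α : Fin d → ℕ, (phi x α) ^ 2) ≤ 2 := by
  have hx2 : ‖x‖ ^ 2 ≤ 1 := pow_le_one₀ (norm_nonneg x) hx
  have h := hasSum_phi_sq x (by linarith)
  refine ⟨h.summable, by rw [h.tsum_eq, one_div], ?_⟩
  rw [h.tsum_eq, inv_le_comm₀ (by linarith) two_pos]
  linarith
end

section
/- Let x, x' ∈ ℝ^d with ‖x‖ ≤ 1 and ‖x'‖ ≤ 1. Then the family (φ(x)_α · φ(x')_α), indexed over all d-tuples α of non-negative integers, is summable, and Σ_α φ(x)_α · φ(x')_α = 1/(1 − ⟨x, x'⟩/2). In other words, the rational kernel k(x, x') = 1/(1 − ⟨x, x'⟩/2) satisfies k(x, x') = ⟨φ(x), φ(x')⟩_{ℓ²}. -/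
/-! `φ(x)_α φ(x')_α` is the multinomial coefficient of `α` times `∏ (x_i x'_i / 2)^{α_i}`.
Grouping the multi-indices by their degree `|α| = n`, the multinomial theorem collapses each
group to `(⟨x, x'⟩ / 2)^n`, so the series is the geometric series with ratio `⟨x, x'⟩ / 2`.
Absolute convergence follows from the same computation with `|x_i x'_i|`, whose sum is at most
`‖x‖ ‖x'‖ ≤ 1` by Cauchy–Schwarz. -/

open Finset RealInnerProductSpace

section Multinomial

variable {ι 𝕜 : Type*} [Fintype ι]

lemma degree_fiber_eq_piAntidiag [DecidableEq ι] (n : ℕ) :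
    (fun α : ι → ℕ => ∑ i, α i) ⁻¹' {n} = ↑(piAntidiag (univ : Finset ι) n) := by
  ext α
  simp [mem_piAntidiag]

lemma tsum_degree_fiber_multinomial_mul_prod_pow {R : Type*} [CommSemiring R] [TopologicalSpace R]
    (z : ι → R) (n : ℕ) :
    ∑' α : (fun α : ι → ℕ => ∑ i, α i) ⁻¹' {n},
      (Nat.multinomial univ (α : ι → ℕ) : R) * ∏ i, z i ^ (α : ι → ℕ) i = (∑ i, z i) ^ n := by
  classical
  rw [degree_fiber_eq_piAntidiag, sum_pow_eq_sum_piAntidiag]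
  exact Finset.tsum_subtype' _ fun α : ι → ℕ => (Nat.multinomial univ α : R) * ∏ i, z i ^ α i

lemma summable_multinomial_mul_prod_pow_of_nonneg {r : ι → ℝ} (hr : ∀ i, 0 ≤ r i)
    (hr_sum : ∑ i, r i < 1) :
    Summable fun α : ι → ℕ => (Nat.multinomial univ α : ℝ) * ∏ i, r i ^ α i := by
  refine (summable_partition (fun α => ?_) (s := fun n => (fun α : ι → ℕ => ∑ i, α i) ⁻¹' {n})
    fun α => ⟨∑ i, α i, rfl, fun _ h => h.symm⟩).mpr ⟨fun n => ?_, ?_⟩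
  · exact mul_nonneg (Nat.cast_nonneg _) (prod_nonneg fun i _ => pow_nonneg (hr i) _)
  · classical
    have : Finite ((fun α : ι → ℕ => ∑ i, α i) ⁻¹' {n}) := by
      rw [degree_fiber_eq_piAntidiag]
      infer_instance
    exact .of_finite
  · simp only [tsum_degree_fiber_multinomial_mul_prod_pow]
    exact summable_geometric_of_lt_one (sum_nonneg fun i _ => hr i) hr_sum

variable [NormedField 𝕜] [CompleteSpace 𝕜]

theorem hasSum_multinomial_mul_prod_pow {z : ι → 𝕜} (hz : ∑ i, ‖z i‖ < 1) :
    HasSum (fun α : ι → ℕ => (Nat.multinomial univ α : 𝕜) * ∏ i, z i ^ α i)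
      (1 - ∑ i, z i)⁻¹ := by
  have hnorm (α : ι → ℕ) : ‖(Nat.multinomial univ α : 𝕜) * ∏ i, z i ^ α i‖ ≤
      (Nat.multinomial univ α : ℝ) * ∏ i, ‖z i‖ ^ α i := by
    rw [norm_mul, norm_prod]
    simp only [norm_pow]
    gcongr
    simpa using Nat.norm_cast_le (α := 𝕜) (Nat.multinomial univ α)
  have hsummable := (summable_multinomial_mul_prod_pow_of_nonneg (fun i => norm_nonneg (z i))
    hz).of_norm_bounded hnorm
  have hgeom := hsummable.hasSum.tsum_fiberwise fun α : ι → ℕ => ∑ i, α i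
  simp only [tsum_degree_fiber_multinomial_mul_prod_pow] at hgeom
  rw [(hasSum_geometric_of_norm_lt_one ((norm_sum_le _ _).trans_lt hz)).unique hgeom]
  exact hsummable.hasSum

end Multinomial

lemma EuclideanSpace.sum_norm_mul_norm_le {𝕜 ι : Type*} [RCLike 𝕜] [Fintype ι]
    (x y : EuclideanSpace 𝕜 ι) : ∑ i, ‖x i‖ * ‖y i‖ ≤ ‖x‖ * ‖y‖ := by
  rw [EuclideanSpace.norm_eq, EuclideanSpace.norm_eq]
  exact Real.sum_mul_le_sqrt_mul_sqrt _ _ _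

lemma phi_mul_phi {d : ℕ} (x y : EuclideanSpace ℝ (Fin d)) (α : Fin d → ℕ) :
    phi x α * phi y α = (Nat.multinomial univ α : ℝ) * ∏ i, (x i * y i / 2) ^ α i := by
  have hcoef_nonneg : 0 ≤ (2 : ℝ)⁻¹ ^ (∑ i, α i) *
      ((∑ i, α i).factorial : ℝ) / ∏ i, ((α i).factorial : ℝ) := by positivity
  have hmultinomial : (Nat.multinomial univ α : ℝ) =
      ((∑ i, α i).factorial : ℝ) / ∏ i, ((α i).factorial : ℝ) := by
    rw [eq_div_iff (by positivity), mul_comm]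
    exact_mod_cast Nat.multinomial_spec univ α
  have hprod : ∏ i, (x i * y i / 2) ^ α i =
      (∏ i, x i ^ α i) * (∏ i, y i ^ α i) * (2 : ℝ)⁻¹ ^ (∑ i, α i) := by
    simp only [← prod_pow_eq_pow_sum, ← prod_mul_distrib, div_eq_mul_inv, mul_pow]
  unfold phi
  rw [hprod, hmultinomial]
  linear_combination (∏ i, x i ^ α i) * (∏ i, y i ^ α i) * Real.mul_self_sqrt hcoef_nonneg

/-- For `‖x‖ ≤ 1`, `‖x'‖ ≤ 1` the family `(φ(x)_α · φ(x')_α)` is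
summable with sum `1/(1 − ⟨x,x'⟩/2)`, i.e. the rational kernel
`k(x,x') = 1/(1 − ⟨x,x'⟩/2)` equals `⟨φ(x), φ(x')⟩_{ℓ²}`. -/
theorem rational_kernel_eq_inner_phi {d : ℕ} (x x' : EuclideanSpace ℝ (Fin d))
    (hx : ‖x‖ ≤ 1) (hx' : ‖x'‖ ≤ 1) :
    Summable (fun α : Fin d → ℕ => phi x α * phi x' α) ∧
    (∑' α : Fin d → ℕ, phi x α * phi x' α) = 1 / (1 - ⟪x, x'⟫ / 2) := by
  have hz : ∑ i, ‖x i * x' i / 2‖ < 1 := by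
    have hcs := EuclideanSpace.sum_norm_mul_norm_le x x'
    have hnorms : ‖x‖ * ‖x'‖ ≤ 1 := mul_le_one₀ hx (norm_nonneg _) hx'
    simp only [norm_div, norm_mul, ← sum_div, Real.norm_ofNat]
    linarith
  have hinner : ∑ i, x i * x' i / 2 = ⟪x, x'⟫ / 2 := by
    simp [PiLp.inner_apply, ← sum_div, mul_comm]
  have hsum := hasSum_multinomial_mul_prod_pow hz
  simp only [← phi_mul_phi, hinner] at hsum
  exact ⟨hsum.summable, by rw [hsum.tsum_eq, one_div]⟩
end

section
/- (Norm bound.) Let p : ℝ^d → ℝ be a multivariate polynomial. Then there exists a square-summable family c = (c_α) ∈ ℓ², indexed by d-tuples α of non-negative integers, such that for every x ∈ ℝ^d with ‖x‖ ≤ 1 the family (c_α·φ(x)_α) is summable with Σ_α c_α·φ(x)_α = p(x), and ‖c‖_{ℓ²} ≤ 2^{deg(p)/2}·‖p‖. -/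
open Finset

/-!
Divide each coefficient of `p` by the square root of the weight `2^{-|α|} |α|!/α!` that `φ`
attaches to its monomial; then `c_α φ(x)_α` is exactly the term `p_α x^α`, and since the
multinomial coefficient `|α|!/α!` is at least `1`, dividing by the weight costs a factor of at
most `2^{|α|} ≤ 2^{deg p}` in each squared coefficient.
-/

section Weight

variable {ι : Type*} [Fintype ι]

noncomputable def phiWeight (α : ι → ℕ) : ℝ :=
  (2 : ℝ)⁻¹ ^ (∑ i, α i) * ((∑ i, α i).factorial : ℝ) / ∏ i, ((α i).factorial : ℝ)

theorem phiWeight_eq_mul_multinomial (α : ι → ℕ) :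
    phiWeight α = (2 : ℝ)⁻¹ ^ (∑ i, α i) * (Nat.multinomial univ α : ℝ) := by
  have hprod : (∏ i, ((α i).factorial : ℝ)) ≠ 0 :=
    prod_ne_zero_iff.2 fun i _ => by positivity
  rw [phiWeight, mul_div_assoc]
  congr 1
  rw [div_eq_iff hprod]
  exact_mod_cast (Nat.multinomial_spec univ α).symm.trans (mul_comm _ _)

theorem phiWeight_pos (α : ι → ℕ) : 0 < phiWeight α := by
  rw [phiWeight_eq_mul_multinomial]
  have := Nat.multinomial_pos univ α
  positivity

theorem inv_phiWeight_le_two_pow (α : ι → ℕ) : (phiWeight α)⁻¹ ≤ 2 ^ ∑ i, α i := by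
  have hmult : (1 : ℝ) ≤ Nat.multinomial univ α := by
    exact_mod_cast Nat.multinomial_pos univ α
  rw [phiWeight_eq_mul_multinomial, mul_inv, inv_pow, inv_inv]
  exact mul_le_of_le_one_right (by positivity) (inv_le_one_of_one_le₀ hmult)

end Weight

theorem phi_eq_mul_sqrt_phiWeight {d : ℕ} (x : EuclideanSpace ℝ (Fin d)) (α : Fin d → ℕ) :
    phi x α = (∏ i, x i ^ α i) * √(phiWeight α) :=
  rfl

theorem Real.sqrt_pow_eq_rpow_div_two {a : ℝ} (ha : 0 ≤ a) (n : ℕ) :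
    √(a ^ n) = a ^ ((n : ℝ) / 2) := by
  rw [Real.sqrt_eq_rpow, ← Real.rpow_natCast, ← Real.rpow_mul ha, mul_one_div]

theorem MvPolynomial.hasSum_of_eq_zero_of_coeff_eq_zero {σ R M : Type*} [Fintype σ]
    [CommSemiring R] [AddCommMonoid M] [TopologicalSpace M] (p : MvPolynomial σ R)
    (g : (σ → ℕ) → M) (hg : ∀ α, coeff (Finsupp.equivFunOnFinite.symm α) p = 0 → g α = 0) :
    HasSum g (∑ β ∈ p.support, g β) := by
  have hsum : ∑ β ∈ p.support, g β =
      ∑ α ∈ p.support.map Finsupp.equivFunOnFinite.toEmbedding, g α :=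
    (sum_map p.support Finsupp.equivFunOnFinite.toEmbedding g).symm
  rw [hsum]
  refine hasSum_sum_of_ne_finset_zero fun α hα => hg α ?_
  contrapose! hα
  exact mem_map_equiv.2 (mem_support_iff.2 hα)

section Representation

variable {d : ℕ} (p : MvPolynomial (Fin d) ℝ)

noncomputable def reprCoeff (α : Fin d → ℕ) : ℝ :=
  MvPolynomial.coeff (Finsupp.equivFunOnFinite.symm α) p / √(phiWeight α)

theorem reprCoeff_mul_phi (x : EuclideanSpace ℝ (Fin d)) (α : Fin d → ℕ) :
    reprCoeff p α * phi x α =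
      MvPolynomial.coeff (Finsupp.equivFunOnFinite.symm α) p * ∏ i, x i ^ α i := by
  have hsqrt : √(phiWeight α) ≠ 0 := (Real.sqrt_pos.2 (phiWeight_pos α)).ne'
  rw [reprCoeff, phi_eq_mul_sqrt_phiWeight]
  field_simp

theorem reprCoeff_sq_le (α : Fin d → ℕ) :
    reprCoeff p α ^ 2 ≤
      2 ^ p.totalDegree * MvPolynomial.coeff (Finsupp.equivFunOnFinite.symm α) p ^ 2 := by
  set a := MvPolynomial.coeff (Finsupp.equivFunOnFinite.symm α) p
  by_cases ha : a = 0
  · simp [reprCoeff, a, ha]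
  have hdeg : ∑ i, α i ≤ p.totalDegree := by
    simpa [Finsupp.sum_fintype] using
      MvPolynomial.le_totalDegree (MvPolynomial.mem_support_iff.2 ha)
  calc reprCoeff p α ^ 2 = (phiWeight α)⁻¹ * a ^ 2 := by
        rw [reprCoeff, div_pow, Real.sq_sqrt (phiWeight_pos α).le, inv_mul_eq_div]
    _ ≤ 2 ^ (∑ i, α i) * a ^ 2 := by gcongr; exact inv_phiWeight_le_two_pow α
    _ ≤ 2 ^ p.totalDegree * a ^ 2 := by gcongr; norm_num

theorem hasSum_reprCoeff_mul_phi (x : EuclideanSpace ℝ (Fin d)) :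
    HasSum (fun α => reprCoeff p α * phi x α) (MvPolynomial.eval (fun i => x i) p) := by
  have := p.hasSum_of_eq_zero_of_coeff_eq_zero
    (fun α => MvPolynomial.coeff (Finsupp.equivFunOnFinite.symm α) p * ∏ i, x i ^ α i)
    fun α hα => by rw [hα, zero_mul]
  simpa [reprCoeff_mul_phi, MvPolynomial.eval_eq'] using this

theorem hasSum_reprCoeff_sq :
    HasSum (fun α => reprCoeff p α ^ 2) (∑ β ∈ p.support, reprCoeff p β ^ 2) :=
  p.hasSum_of_eq_zero_of_coeff_eq_zero _ fun α hα => by simp [reprCoeff, hα]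

theorem sum_reprCoeff_sq_le :
    ∑ β ∈ p.support, reprCoeff p β ^ 2 ≤ 2 ^ p.totalDegree * mvNorm p ^ 2 := by
  rw [mvNorm, Real.sq_sqrt (sum_nonneg fun _ _ => sq_nonneg _), mul_sum]
  exact sum_le_sum fun β _ => by simpa using reprCoeff_sq_le p β

end Representation

/-- (Norm bound.) For every multivariate polynomial `p` there exists
a square-summable family `c ∈ ℓ²` such that `⟨c, φ(x)⟩ = p(x)` whenever `‖x‖ ≤ 1`, and
`‖c‖_{ℓ²} ≤ 2^{deg(p)/2}·‖p‖`. -/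
theorem exists_l2_repr_of_mvPolynomial {d : ℕ} (p : MvPolynomial (Fin d) ℝ) :
    ∃ c : (Fin d → ℕ) → ℝ,
      Summable (fun α => (c α) ^ 2) ∧
      (∀ x : EuclideanSpace ℝ (Fin d), ‖x‖ ≤ 1 →
        Summable (fun α => c α * phi x α) ∧
        (∑' α : Fin d → ℕ, c α * phi x α) = MvPolynomial.eval (fun i => x i) p) ∧
      Real.sqrt (∑' α : Fin d → ℕ, (c α) ^ 2)
        ≤ (2 : ℝ) ^ ((p.totalDegree : ℝ) / 2) * mvNorm p := by
  refine ⟨reprCoeff p, (hasSum_reprCoeff_sq p).summable, fun x _ =>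
    ⟨(hasSum_reprCoeff_mul_phi p x).summable, (hasSum_reprCoeff_mul_phi p x).tsum_eq⟩, ?_⟩
  calc √(∑' α, reprCoeff p α ^ 2) ≤ √(2 ^ p.totalDegree * mvNorm p ^ 2) := by
        rw [(hasSum_reprCoeff_sq p).tsum_eq]
        exact Real.sqrt_le_sqrt (sum_reprCoeff_sq_le p)
    _ = (2 : ℝ) ^ ((p.totalDegree : ℝ) / 2) * mvNorm p := by
        rw [Real.sqrt_mul (by positivity),
          Real.sqrt_sq (show 0 ≤ mvNorm p from Real.sqrt_nonneg _),
          Real.sqrt_pow_eq_rpow_div_two zero_le_two]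
end
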